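/- arXiv:1910.06280 — 5 statements merged into one kernel-verified Lean document; each statement's English description precedes it below -/
import Mathlib

section
/- If (T,I,V) is an equilibrium of the dimensionless system with V ≠ 0, then T = 1, I = V, and V satisfies the quadratic equation βV² + (β(1−R_0) + 1 − R_m)V + (1 − R_0) = 0. -/
/-- An equilibrium with V ≠ 0 satisfies T = 1, I = V, and the quadratic for V. -/
theorem infected_equilibrium_characterization
    (R0 Rm a1 a2 b T I V : ℝ)
    (hR0 : 0 < R0) (hRm : 0 < Rm) (ha1 : 0 < a1) (ha2 : 0 < a2) (hb : 0 < b)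
    (hden : 1 + b * V ≠ 0)
    (h1 : R0 + (Rm / (1 + b * V)) * T * V - T * V - T = 0)
    (h2 : a1 * (T * V - I) = 0)
    (h3 : a2 * (I - V) = 0)
    (hV : V ≠ 0) :
    T = 1 ∧ I = V ∧ b * V ^ 2 + (b * (1 - R0) + 1 - Rm) * V + (1 - R0) = 0 := by
  have hTI : T * V = I := by
    have := mul_eq_zero.mp h2
    rcases this with h | h
    · exact absurd h ha1.ne'
    · linarith
  have hIV : I = V := by
    rcases mul_eq_zero.mp h3 with h | h
    · exact absurd h ha2.ne'
    · linarith
  have hT : T = 1 := by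
    have : T * V = V := by rw [hTI, hIV]
    field_simp at this
    exact this
  refine ⟨hT, hIV, ?_⟩
  subst hT
  have h1' : (R0 + (Rm / (1 + b * V)) * 1 * V - 1 * V - 1) * (1 + b * V) = 0 := by
    rw [h1]; ring
  have : R0 * (1 + b * V) + Rm * V - V * (1 + b * V) - (1 + b * V) = 0 := by
    field_simp at h1'
    linarith
  nlinarith [this]
end

section
/- If R_0 < 1 and α₁, α₂ > 0, then every eigenvalue of the matrix with rows (−1, 0, (R_m−1)R_0), (0, −α₁, α₁R_0), (0, α₂, −α₂) has negative real part; if R_0 > 1, the matrix has an eigenvalue with positive real part. -/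
open Polynomial

private lemma charpoly_eval_aux (a1 a2 R0 Rm : ℝ) (η : ℂ) :
    ((Matrix.of ![![-1, 0, ((Rm : ℂ) - 1) * R0],
                  ![0, -(a1 : ℂ), (a1 : ℂ) * R0],
                  ![0, (a2 : ℂ), -(a2 : ℂ)]] : Matrix (Fin 3) (Fin 3) ℂ).charpoly).eval η
      = (η + 1) * ((η + a1) * (η + a2) - a1 * a2 * R0) := by
  rw [Matrix.charpoly, Matrix.det_fin_three]
  simp [Matrix.charmatrix_apply, Matrix.diagonal, Matrix.of_apply, Matrix.vecHead,
    Matrix.vecTail]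
  ring

/-- Stability criterion for the uninfected equilibrium: for R₀ < 1 every
eigenvalue has negative real part; for R₀ > 1 there is an eigenvalue with
positive real part. -/
theorem uninfected_stability (a1 a2 R0 Rm : ℝ)
    (ha1 : 0 < a1) (ha2 : 0 < a2) (hR0 : 0 < R0) (hRm : 0 < Rm) :
    (R0 < 1 → ∀ η : ℂ,
      ((Matrix.of ![![-1, 0, ((Rm : ℂ) - 1) * R0],
                    ![0, -(a1 : ℂ), (a1 : ℂ) * R0],
                    ![0, (a2 : ℂ), -(a2 : ℂ)]] : Matrix (Fin 3) (Fin 3) ℂ).charpoly).IsRoot η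
        → η.re < 0) ∧
    (1 < R0 → ∃ η : ℂ,
      ((Matrix.of ![![-1, 0, ((Rm : ℂ) - 1) * R0],
                    ![0, -(a1 : ℂ), (a1 : ℂ) * R0],
                    ![0, (a2 : ℂ), -(a2 : ℂ)]] : Matrix (Fin 3) (Fin 3) ℂ).charpoly).IsRoot η
        ∧ 0 < η.re) := by
  constructor
  · intro hlt η hroot
    rw [Polynomial.IsRoot, charpoly_eval_aux] at hroot
    rcases mul_eq_zero.mp hroot with h | h
    · have : η = -1 := by linear_combination h
      simp [this]
    · -- quadratic case
      have h2 : η ^ 2 + ((a1 + a2 : ℝ) : ℂ) * η + ((a1 * a2 * (1 - R0) : ℝ) : ℂ) = 0 := by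
        push_cast
        linear_combination h
      set x := η.re with hx
      set y := η.im with hy
      have hreal : x ^ 2 - y ^ 2 + (a1 + a2) * x + a1 * a2 * (1 - R0) = 0 := by
        have := congrArg Complex.re h2
        simp [pow_two, Complex.add_re, Complex.mul_re, Complex.mul_im] at this
        nlinarith [this]
      have himag : (2 * x + (a1 + a2)) * y = 0 := by
        have := congrArg Complex.im h2
        simp [pow_two, Complex.add_im, Complex.mul_re, Complex.mul_im] at this
        nlinarith [this]
      have hc : 0 < a1 * a2 * (1 - R0) := by
        have : 0 < 1 - R0 := by linarith
        positivity
      rcases mul_eq_zero.mp himag with h3 | h3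
      · -- 2x + b = 0
        nlinarith
      · -- y = 0
        rw [h3] at hreal
        by_contra hxn
        push_neg at hxn
        nlinarith
  · intro hgt
    set b := a1 + a2 with hb
    set D := (a1 - a2) ^ 2 + 4 * a1 * a2 * R0 with hD
    have hDpos : 0 < D := by positivity
    have hDb : b ^ 2 < D := by
      rw [hb, hD]
      have h1 : 0 < R0 - 1 := by linarith
      nlinarith [mul_pos (mul_pos ha1 ha2) h1]
    set x := (-b + Real.sqrt D) / 2 with hxdef
    have hsq : Real.sqrt D ^ 2 = D := Real.sq_sqrt hDpos.le
    have hbs : b < Real.sqrt D := by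
      have h1 : b = Real.sqrt (b ^ 2) := by
        rw [Real.sqrt_sq (by positivity)]
      rw [h1]
      exact Real.sqrt_lt_sqrt (by positivity) hDb
    have hxpos : 0 < x := by
      rw [hxdef]
      have hb0 : 0 < b := by positivity
      linarith
    have hq : x ^ 2 + b * x + (a1 * a2 - a1 * a2 * R0) = 0 := by
      have h5 : 2 * x + b = Real.sqrt D := by rw [hxdef]; ring
      have h4 : (2 * x + b) ^ 2 = D := by rw [h5, hsq]
      rw [hb] at h4 ⊢
      rw [hD] at h4
      nlinarith [h4]
    refine ⟨(x : ℂ), ?_, by simpa using hxpos⟩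
    rw [Polynomial.IsRoot, charpoly_eval_aux]
    have : ((x : ℂ) + a1) * ((x : ℂ) + a2) - a1 * a2 * R0 = 0 := by
      have hqc := congrArg (fun t : ℝ => (t : ℂ)) hq
      rw [hb] at hqc; push_cast at hqc
      linear_combination hqc
    rw [this, mul_zero]
end

section
/- The characteristic polynomial of the 3×3 matrix with rows (−R_0, 0, R_m/(1+βV)² − 1), (α₁V, −α₁, α₁), (0, α₂, −α₂) is η³ + d₂η² + d₁η + d₀ with d₂ = α₁+α₂+R_0, d₁ = (α₁+α₂)R_0, and d₀ = (α₁α₂V/(1+βV)²)·((1+βV)² − R_m). -/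
open Polynomial

namespace Matrix

theorem charpoly_fin_three {R : Type*} [CommRing R] (M : Matrix (Fin 3) (Fin 3) R) :
    M.charpoly = X ^ 3 - C M.trace * X ^ 2
      + C (M 0 0 * M 1 1 - M 0 1 * M 1 0 + M 0 0 * M 2 2 - M 0 2 * M 2 0
          + M 1 1 * M 2 2 - M 1 2 * M 2 1) * X - C M.det := by
  simp only [charpoly, det_fin_three, trace_fin_three, charmatrix_apply, diagonal_apply,
    ↓reduceIte, Fin.reduceEq, map_add, map_sub, map_mul]
  ring

end Matrix

/-- The characteristic polynomial of the Jacobian at an infected equilibrium. -/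
theorem charpoly_infected (a1 a2 beta R0 Rm V : ℝ) (hden : 1 + beta * V ≠ 0) :
    (Matrix.of ![![-R0, 0, Rm / (1 + beta * V) ^ 2 - 1],
                 ![a1 * V, -a1, a1],
                 ![0, a2, -a2]] : Matrix (Fin 3) (Fin 3) ℝ).charpoly
      = X ^ 3 + C (a1 + a2 + R0) * X ^ 2 + C ((a1 + a2) * R0) * X
          + C ((a1 * a2 * V / (1 + beta * V) ^ 2) * ((1 + beta * V) ^ 2 - Rm)) := by
  have hw := pow_ne_zero 2 hden
  generalize (1 + beta * V) ^ 2 = w at hw ⊢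
  set J : Matrix (Fin 3) (Fin 3) ℝ :=
    Matrix.of ![![-R0, 0, Rm / w - 1], ![a1 * V, -a1, a1], ![0, a2, -a2]]
  have htrace : J.trace = -(a1 + a2 + R0) := by
    simp only [Matrix.trace_fin_three, J, Matrix.of_apply, Matrix.cons_val', Matrix.cons_val,
      Matrix.cons_val_fin_one]
    ring
  have hminors : J 0 0 * J 1 1 - J 0 1 * J 1 0 + J 0 0 * J 2 2 - J 0 2 * J 2 0
      + J 1 1 * J 2 2 - J 1 2 * J 2 1 = (a1 + a2) * R0 := by
    simp only [J, Matrix.of_apply, Matrix.cons_val', Matrix.cons_val, Matrix.cons_val_fin_one]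
    ring
  have hdet : J.det = -(a1 * a2 * V / w * (w - Rm)) := by
    simp only [Matrix.det_fin_three, J, Matrix.of_apply, Matrix.cons_val', Matrix.cons_val,
      Matrix.cons_val_fin_one]
    field_simp
    ring
  rw [J.charpoly_fin_three, htrace, hminors, hdet, C_neg, C_neg]
  ring
end

section
/- Let d₁, d₂ > 0 and suppose η(R_m) is a root of η³ + d₂η² + d₁η + d₀(R_m) = 0 depending differentiably on R_m with η(R_m*) = i√d₁. Then Re(η′(R_m*)) = d₀′(R_m*)/(2(d₁ + d₂²)); in particular Re(η′(R_m*)) ≠ 0 whenever d₀′(R_m*) ≠ 0. -/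
/-!
Differentiating the root identity gives p′(η) η′ + d₀′ = 0 with p′(η) = 3η² + 2d₂η + d₁.
At η = i√d₁ this coefficient is w = -2d₁ + 2d₂√d₁ i, so η′ = -d₀′/w, whose real part is
-d₀′ Re w / |w|² = 2d₁d₀′ / (4d₁(d₁ + d₂²)).
-/

open Complex

lemma implicit_deriv_of_cubic_root {a b : ℂ} {c : ℝ → ℝ} {η : ℝ → ℂ} {x : ℝ}
    (hc : DifferentiableAt ℝ c x) (hη : DifferentiableAt ℝ η x)
    (hroot : ∀ r, η r ^ 3 + a * η r ^ 2 + b * η r + c r = 0) :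
    (3 * η x ^ 2 + 2 * a * η x + b) * deriv η x + deriv c x = 0 := by
  have hη' := hη.hasDerivAt
  have hsum : HasDerivAt (fun r => η r ^ 3 + a * η r ^ 2 + b * η r + c r)
      ((3 * η x ^ 2 + 2 * a * η x + b) * deriv η x + deriv c x) x :=
    ((((hη'.fun_pow 3).add ((hη'.fun_pow 2).const_mul a)).add (hη'.const_mul b)).add
      hc.hasDerivAt.ofReal_comp).congr_deriv (by push_cast; ring)
  simp only [hroot] at hsum
  exact hsum.unique (hasDerivAt_const x 0)

lemma Complex.re_eq_of_mul_add_ofReal_eq_zero {w z : ℂ} {e : ℝ} (hw : w ≠ 0)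
    (h : w * z + e = 0) : z.re = -e * w.re / normSq w := by
  have hz : z = -e / w := by
    rw [eq_div_iff hw]
    linear_combination h
  simp [hz, div_re]

lemma cubic_derivative_at_I_mul_sqrt {d1 : ℝ} (h1 : 0 ≤ d1) (d2 : ℝ) :
    (3 * (I * Real.sqrt d1) ^ 2 + 2 * d2 * (I * Real.sqrt d1) + d1 : ℂ) =
      ⟨-2 * d1, 2 * d2 * Real.sqrt d1⟩ := by
  have hs : Real.sqrt d1 * Real.sqrt d1 = d1 := Real.mul_self_sqrt h1
  apply Complex.ext <;> simp [pow_two, hs]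
  ring

theorem transversality_general (d1 d2 : ℝ) (h1 : 0 < d1)
    (d0 : ℝ → ℝ) (η : ℝ → ℂ) (Rms : ℝ)
    (hd0 : DifferentiableAt ℝ d0 Rms) (hη : DifferentiableAt ℝ η Rms)
    (hroot : ∀ r : ℝ, η r ^ 3 + (d2 : ℂ) * η r ^ 2 + (d1 : ℂ) * η r + (d0 r : ℂ) = 0)
    (hstar : η Rms = Complex.I * Real.sqrt d1) :
    (deriv η Rms).re = deriv d0 Rms / (2 * (d1 + d2 ^ 2)) ∧
    (deriv d0 Rms ≠ 0 → (deriv η Rms).re ≠ 0) := by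
  have hlin := implicit_deriv_of_cubic_root hd0 hη hroot
  rw [hstar, cubic_derivative_at_I_mul_sqrt h1.le] at hlin
  have hw : (⟨-2 * d1, 2 * d2 * Real.sqrt d1⟩ : ℂ) ≠ 0 := fun h => by
    simpa [h1.ne'] using congrArg re h
  have hre : (deriv η Rms).re = deriv d0 Rms / (2 * (d1 + d2 ^ 2)) := by
    have hnormSq : normSq ⟨-2 * d1, 2 * d2 * Real.sqrt d1⟩ = 4 * d1 * (d1 + d2 ^ 2) := by
      rw [normSq_mk]
      linear_combination 4 * d2 ^ 2 * Real.mul_self_sqrt h1.le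
    rw [re_eq_of_mul_add_ofReal_eq_zero hw hlin, hnormSq]
    field_simp
    ring
  exact ⟨hre, fun hne => hre ▸ div_ne_zero hne (by positivity)⟩

/-- Transversality: if η(R_m) is a differentiable branch of roots of the
characteristic cubic with η(R_m*) = i√d₁, then
Re η′(R_m*) = d₀′(R_m*)/(2(d₁+d₂²)). -/
theorem transversality (d1 d2 : ℝ) (h1 : 0 < d1) (h2 : 0 < d2)
    (d0 : ℝ → ℝ) (η : ℝ → ℂ) (Rms : ℝ)
    (hd0 : DifferentiableAt ℝ d0 Rms) (hη : DifferentiableAt ℝ η Rms)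
    (hroot : ∀ r : ℝ, η r ^ 3 + (d2 : ℂ) * η r ^ 2 + (d1 : ℂ) * η r + (d0 r : ℂ) = 0)
    (hstar : η Rms = Complex.I * Real.sqrt d1) :
    (deriv η Rms).re = deriv d0 Rms / (2 * (d1 + d2 ^ 2)) ∧
    (deriv d0 Rms ≠ 0 → (deriv η Rms).re ≠ 0) :=
  transversality_general d1 d2 h1 d0 η Rms hd0 hη hroot hstar
end

section
/- Let a = β > 0, b = β(1−R_0) + 1 − R_m < 0, c = 1 − R_0 > 0, b² − 4ac ≥ 0, and V₋ = (−b − √(b²−4ac))/(2a). Then V₋ > 0 and βV₋² + R_0 − 1 ≤ 0. -/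
/-- The E_i⁻ equilibrium: V₋ > 0 and βV₋² + R₀ − 1 ≤ 0 throughout its region
of existence. -/
theorem Eiminus_violates_RH (beta R0 Rm : ℝ)
    (hbeta : 0 < beta)
    (hb : beta * (1 - R0) + 1 - Rm < 0)
    (hc : 0 < 1 - R0)
    (hdisc : (beta * (1 - R0) + 1 - Rm) ^ 2 - 4 * beta * (1 - R0) ≥ 0) :
    0 < (-(beta * (1 - R0) + 1 - Rm) -
          Real.sqrt ((beta * (1 - R0) + 1 - Rm) ^ 2 - 4 * beta * (1 - R0))) / (2 * beta) ∧
    beta * ((-(beta * (1 - R0) + 1 - Rm) -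
          Real.sqrt ((beta * (1 - R0) + 1 - Rm) ^ 2 - 4 * beta * (1 - R0))) / (2 * beta)) ^ 2
      + R0 - 1 ≤ 0 := by
  set b := beta * (1 - R0) + 1 - Rm with hbdef
  set s := Real.sqrt (b ^ 2 - 4 * beta * (1 - R0)) with hsdef
  have hsnn : 0 ≤ s := Real.sqrt_nonneg _
  have hs2 : s ^ 2 = b ^ 2 - 4 * beta * (1 - R0) := Real.sq_sqrt hdisc
  have hslt : s < -b := by nlinarith [mul_pos hbeta hc]
  constructor
  · exact div_pos (by linarith) (by linarith)
  · have key : (-b - s) ^ 2 - 4 * beta * (1 - R0) ≤ 0 := by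
      nlinarith [mul_nonneg hsnn (show 0 ≤ -(b + s) by linarith)]
    have expand : beta * ((-b - s) / (2 * beta)) ^ 2 + R0 - 1
        = ((-b - s) ^ 2 - 4 * beta * (1 - R0)) / (4 * beta) := by
      field_simp
      ring
    rw [expand]
    exact div_nonpos_of_nonpos_of_nonneg key (by positivity)
end
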